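/- Fix for each bundle e ∈ E with |e| ≥ 2 an enumeration e = {i₁ᵉ,…,i_{k_e}ᵉ} of its elements, and define R_RMC ⊆ [0,1]^E as the set of all z for which there exist auxiliary values wᵉ_m (e ∈ E with |e| ≥ 2, 1 ≤ m ≤ k_e) with wᵉ_1 = z_{{i₁ᵉ}}, wᵉ_{k_e} = z_e, and max{0, wᵉ_{m−1} + z_{{i_mᵉ}} − 1} ≤ wᵉ_m ≤ min{wᵉ_{m−1}, z_{{i_mᵉ}}} for all 2 ≤ m ≤ k_e. Then R_RMC is an exact relaxation oracle for G: M_G ⊆ R_RMC, and every z ∈ R_RMC with z_{{i}} ∈ {0,1} for all i ∈ V satisfies z_e = ∏_{i∈e} z_{{i}} for all e ∈ E. Consequently the projection onto the (ρ,y)-coordinates of the perspective system with R = R_RMC and x ∈ {0,1}^V equals C_G. (Proposition 1, left-deep decomposition.) -/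

import Mathlib

/-!
On binary arguments the McCormick envelope `max 0 (a + b - 1) ≤ w ≤ min a b` pins `w = a * b`,
so along the left-deep chain of a bundle each auxiliary value is the product of the first
singleton coordinates, and the last one is the monomial; conversely these partial products form
a feasible chain. This makes `R_RMC` exact, and the perspective formulation is then valid for any
exact oracle: `ρ + Σ v_e y_e = 1` forces `ρ > 0`, the lower bound `L_i ≤ x_i` forces
`z_{i} = 0` when `x_i = 0`, and `x_i ≤ U_i` together with the normalisation forces `z_{i} = 1`
when `x_i = 1`; exactness turns `z` into the monomial vector of `x`, whence `ρ = 1 / D(x)`.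
Conversely, at `y = ρ • (∏_{i∈e} x_i)_e` with `ρ = 1 / D(x)` both `L_i` and `U_i` equal
`x_i ρ D(x) = x_i`.
-/

open Finset

/-- A vector is binary if each coordinate is 0 or 1. -/
def IsBinaryVec {α : Type*} (x : α → ℝ) : Prop := ∀ i, x i = 0 ∨ x i = 1

variable {N : ℕ}

/-- The denominator `D(x) = 1 + Σ_{c∈E} v_c ∏_{i∈c} x_i`. -/
noncomputable def Dx (E : Finset (Finset (Fin N))) (v : Finset (Fin N) → ℝ)
    (x : Fin N → ℝ) : ℝ :=
  1 + ∑ c ∈ E, v c * ∏ i ∈ c, x i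

/-- The choice probability set `C_G`. -/
def choiceSet (E : Finset (Finset (Fin N))) (v : Finset (Fin N) → ℝ) :
    Set (ℝ × ({e // e ∈ E} → ℝ)) :=
  {p | ∃ x : Fin N → ℝ, IsBinaryVec x ∧ p.1 = 1 / Dx E v x ∧
      ∀ e : {e // e ∈ E}, p.2 e = (∏ i ∈ e.1, x i) / Dx E v x}

/-- The monomial set `M_G`. -/
def monoSet (E : Finset (Finset (Fin N))) : Set ({e // e ∈ E} → ℝ) :=
  {z | ∃ x : Fin N → ℝ, IsBinaryVec x ∧ ∀ e : {e // e ∈ E}, z e = ∏ i ∈ e.1, x i}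

/-- An exact relaxation oracle: `R ⊆ [0,1]^E`, `M_G ⊆ R`, and every `z ∈ R` with binary
singleton coordinates is the corresponding monomial vector. -/
def IsExactOracle (E : Finset (Finset (Fin N)))
    (hsing : ∀ i : Fin N, ({i} : Finset (Fin N)) ∈ E)
    (R : Set ({e // e ∈ E} → ℝ)) : Prop :=
  (∀ z ∈ R, ∀ e : {e // e ∈ E}, z e ∈ Set.Icc (0 : ℝ) 1) ∧
  monoSet E ⊆ R ∧
  (∀ z ∈ R, (∀ i : Fin N, z ⟨{i}, hsing i⟩ = 0 ∨ z ⟨{i}, hsing i⟩ = 1) →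
    ∀ e : {e // e ∈ E}, z e = ∏ i ∈ e.1, z ⟨{i}, hsing i⟩)

/-- `L_i(ρ,y)`. -/
noncomputable def Lb (E : Finset (Finset (Fin N)))
    (hsing : ∀ i : Fin N, ({i} : Finset (Fin N)) ∈ E)
    (v : Finset (Fin N) → ℝ) (ρ : ℝ) (y : {e // e ∈ E} → ℝ) (i : Fin N) : ℝ :=
  y ⟨{i}, hsing i⟩ +
    ∑ e ∈ E.attach, (if i ∈ e.1 then v e.1 * y e
      else v e.1 * max 0 (y ⟨{i}, hsing i⟩ + y e - ρ))

/-- `U_i(ρ,y)`. -/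
noncomputable def Ub (E : Finset (Finset (Fin N)))
    (hsing : ∀ i : Fin N, ({i} : Finset (Fin N)) ∈ E)
    (v : Finset (Fin N) → ℝ) (ρ : ℝ) (y : {e // e ∈ E} → ℝ) (i : Fin N) : ℝ :=
  y ⟨{i}, hsing i⟩ +
    ∑ e ∈ E.attach, (if i ∈ e.1 then v e.1 * y e
      else v e.1 * min (y ⟨{i}, hsing i⟩) (y e))

/-- The perspective system. -/
noncomputable def persSystem (E : Finset (Finset (Fin N)))
    (hsing : ∀ i : Fin N, ({i} : Finset (Fin N)) ∈ E)
    (v : Finset (Fin N) → ℝ) (R : Set ({e // e ∈ E} → ℝ)) :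
    Set (ℝ × ({e // e ∈ E} → ℝ) × (Fin N → ℝ)) :=
  {p | 0 ≤ p.1 ∧ (∃ z ∈ R, p.2.1 = p.1 • z) ∧
      p.1 + ∑ e ∈ E.attach, v e.1 * p.2.1 e = 1 ∧
      ∀ i : Fin N, Lb E hsing v p.1 p.2.1 i ≤ p.2.2 i ∧
        p.2.2 i ≤ Ub E hsing v p.1 p.2.1 i}

/-- The recursive McCormick relaxation `R_RMC` determined by a fixed enumeration
`ord e 0, ord e 1, …, ord e (|e|−1)` of each bundle `e`: `z ∈ [0,1]^E` such that for every
bundle with at least two elements there is a chain of auxiliary values `w` starting at the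
first singleton coordinate, ending at `z_e`, and linked by McCormick envelopes. -/
def rmcOracle (E : Finset (Finset (Fin N)))
    (hsing : ∀ i : Fin N, ({i} : Finset (Fin N)) ∈ E)
    (ord : Finset (Fin N) → ℕ → Fin N) : Set ({e // e ∈ E} → ℝ) :=
  {z | (∀ e : {e // e ∈ E}, z e ∈ Set.Icc (0 : ℝ) 1) ∧
    ∀ e : {e // e ∈ E}, 2 ≤ e.1.card →
      ∃ w : ℕ → ℝ,
        w 0 = z ⟨{ord e.1 0}, hsing _⟩ ∧
        w (e.1.card - 1) = z e ∧
        ∀ m, 1 ≤ m → m ≤ e.1.card - 1 →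
          max 0 (w (m - 1) + z ⟨{ord e.1 m}, hsing _⟩ - 1) ≤ w m ∧
          w m ≤ min (w (m - 1)) (z ⟨{ord e.1 m}, hsing _⟩)}

section Binary

variable {a b c ρ : ℝ}

lemma prod_eq_zero_or_one {ι : Type*} {s : Finset ι} {x : ι → ℝ}
    (hx : ∀ i ∈ s, x i = 0 ∨ x i = 1) : ∏ i ∈ s, x i = 0 ∨ ∏ i ∈ s, x i = 1 :=
  Finset.prod_induction x (fun t => t = 0 ∨ t = 1)
    (fun a b ha hb => by rcases ha with rfl | rfl <;> rcases hb with rfl | rfl <;> simp)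
    (Or.inr rfl) hx

lemma mul_prod_eq_prod_of_mem {ι : Type*} {s : Finset ι} {x : ι → ℝ} {i : ι} (hi : i ∈ s)
    (hxi : x i = 0 ∨ x i = 1) : x i * ∏ j ∈ s, x j = ∏ j ∈ s, x j := by
  rcases hxi with h | h
  · rw [h, zero_mul, Finset.prod_eq_zero hi h]
  · rw [h, one_mul]

lemma max_zero_add_sub_one_eq_mul (ha : a = 0 ∨ a = 1) (hb : b = 0 ∨ b = 1) :
    max 0 (a + b - 1) = a * b := by
  rcases ha with rfl | rfl <;> rcases hb with rfl | rfl <;> norm_num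

lemma min_eq_mul_of_binary (ha : a = 0 ∨ a = 1) (hb : b = 0 ∨ b = 1) : min a b = a * b := by
  rcases ha with rfl | rfl <;> rcases hb with rfl | rfl <;> norm_num

lemma mcCormick_iff_eq_mul (ha : a = 0 ∨ a = 1) (hb : b = 0 ∨ b = 1) :
    (max 0 (a + b - 1) ≤ c ∧ c ≤ min a b) ↔ c = a * b := by
  rw [max_zero_add_sub_one_eq_mul ha hb, min_eq_mul_of_binary ha hb]
  constructor
  · rintro ⟨h₁, h₂⟩
    exact le_antisymm h₂ h₁
  · rintro rfl
    exact ⟨le_rfl, le_rfl⟩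

lemma max_zero_mul_add_mul_sub_eq_mul (hρ : 0 ≤ ρ) (ha : a = 0 ∨ a = 1) (hb : b = 0 ∨ b = 1) :
    max 0 (ρ * a + ρ * b - ρ) = ρ * (a * b) := by
  rw [← max_zero_add_sub_one_eq_mul ha hb, mul_max_of_nonneg _ _ hρ, mul_zero, mul_sub, mul_add,
    mul_one]

lemma min_mul_mul_eq_mul (hρ : 0 ≤ ρ) (ha : a = 0 ∨ a = 1) (hb : b = 0 ∨ b = 1) :
    min (ρ * a) (ρ * b) = ρ * (a * b) := by
  rw [← mul_min_of_nonneg _ _ hρ, min_eq_mul_of_binary ha hb]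

end Binary

section Chain

variable {g : ℕ → ℝ} {k : ℕ}

lemma eq_prod_range_of_mcCormick_chain (hg : ∀ j, g j = 0 ∨ g j = 1) {w : ℕ → ℝ}
    (h₀ : w 0 = g 0)
    (hstep : ∀ m, 1 ≤ m → m ≤ k →
      max 0 (w (m - 1) + g m - 1) ≤ w m ∧ w m ≤ min (w (m - 1)) (g m)) :
    ∀ m ≤ k, w m = ∏ j ∈ Finset.range (m + 1), g j := by
  intro m
  induction m with
  | zero => intro _; simpa using h₀
  | succ n ih =>
    intro hn
    have hw : w n = ∏ j ∈ Finset.range (n + 1), g j := ih (by omega)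
    have hwn : w n = 0 ∨ w n = 1 := hw ▸ prod_eq_zero_or_one fun j _ => hg j
    have hnext := (mcCormick_iff_eq_mul hwn (hg (n + 1))).mp (hstep (n + 1) (by omega) hn)
    rw [hnext, Finset.prod_range_succ, hw]

lemma mcCormick_chain_prod_range (hg : ∀ j, g j = 0 ∨ g j = 1) {m : ℕ} (hm : 1 ≤ m) :
    max 0 (∏ j ∈ Finset.range (m - 1 + 1), g j + g m - 1) ≤ ∏ j ∈ Finset.range (m + 1), g j ∧
      ∏ j ∈ Finset.range (m + 1), g j ≤ min (∏ j ∈ Finset.range (m - 1 + 1), g j) (g m) := by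
  rw [mcCormick_iff_eq_mul (prod_eq_zero_or_one fun j _ => hg j) (hg m), Nat.sub_add_cancel hm,
    Finset.prod_range_succ]

end Chain

lemma prod_eq_prod_range_of_image_eq {α M : Type*} [DecidableEq α] [CommMonoid M]
    {s : Finset α} {ord : ℕ → α}
    (h : (Finset.range s.card).image ord = s) (f : α → M) :
    ∏ i ∈ s, f i = ∏ j ∈ Finset.range s.card, f (ord j) := by
  have hinj : Set.InjOn ord (Finset.range s.card) :=
    Finset.card_image_iff.mp (by rw [h, Finset.card_range])
  conv_lhs => rw [← h]
  exact Finset.prod_image hinj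

section Oracle

variable {E : Finset (Finset (Fin N))} {hsing : ∀ i : Fin N, ({i} : Finset (Fin N)) ∈ E}
  {ord : Finset (Fin N) → ℕ → Fin N}

lemma monoSet_subset_rmcOracle (hord : ∀ e ∈ E, (Finset.range e.card).image (ord e) = e) :
    monoSet E ⊆ rmcOracle E hsing ord := by
  rintro z ⟨x, hx, hz⟩
  have hsingle : ∀ i, z ⟨{i}, hsing i⟩ = x i := fun i => by rw [hz, Finset.prod_singleton]
  refine ⟨fun e => ?_, fun e he => ?_⟩
  · rw [hz e]
    rcases prod_eq_zero_or_one (s := e.1) fun i _ => hx i with h | h <;> simp [h]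
  · refine ⟨fun m => ∏ j ∈ Finset.range (m + 1), x (ord e.1 j), ?_, ?_, ?_⟩
    · simp [hsingle]
    · rw [hz e, prod_eq_prod_range_of_image_eq (hord e.1 e.2)]
      exact congrArg (fun n => ∏ j ∈ Finset.range n, x (ord e.1 j)) (Nat.sub_add_cancel (by omega))
    · intro m hm _
      simpa only [hsingle] using mcCormick_chain_prod_range (fun j => hx (ord e.1 j)) hm

lemma eq_prod_of_mem_rmcOracle (hne : ∀ e ∈ E, e.Nonempty)
    (hord : ∀ e ∈ E, (Finset.range e.card).image (ord e) = e) {z : {e // e ∈ E} → ℝ}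
    (hz : z ∈ rmcOracle E hsing ord)
    (hbin : ∀ i : Fin N, z ⟨{i}, hsing i⟩ = 0 ∨ z ⟨{i}, hsing i⟩ = 1) (e : {e // e ∈ E}) :
    z e = ∏ i ∈ e.1, z ⟨{i}, hsing i⟩ := by
  rcases (Finset.one_le_card.mpr (hne e.1 e.2)).eq_or_lt with hcard | hcard
  · obtain ⟨i, hi⟩ := Finset.card_eq_one.mp hcard.symm
    obtain rfl : e = ⟨{i}, hsing i⟩ := Subtype.ext hi
    rw [Finset.prod_singleton]
  · obtain ⟨w, hw₀, hwlast, hstep⟩ := hz.2 e hcard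
    have hchain := eq_prod_range_of_mcCormick_chain (fun j => hbin (ord e.1 j)) hw₀ hstep _ le_rfl
    rw [hwlast, Nat.sub_add_cancel (by omega)] at hchain
    rw [hchain, prod_eq_prod_range_of_image_eq (hord e.1 e.2)]

lemma isExactOracle_rmcOracle (hne : ∀ e ∈ E, e.Nonempty)
    (hord : ∀ e ∈ E, (Finset.range e.card).image (ord e) = e) :
    IsExactOracle E hsing (rmcOracle E hsing ord) :=
  ⟨fun _ hz => hz.1, monoSet_subset_rmcOracle hord,
    fun _ hz hbin => eq_prod_of_mem_rmcOracle hne hord hz hbin⟩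

end Oracle

def monomialVec (E : Finset (Finset (Fin N))) (x : Fin N → ℝ) : {e // e ∈ E} → ℝ :=
  fun e => ∏ i ∈ e.1, x i

section Perspective

variable {E : Finset (Finset (Fin N))} {hsing : ∀ i : Fin N, ({i} : Finset (Fin N)) ∈ E}
  {v : Finset (Fin N) → ℝ} {R : Set ({e // e ∈ E} → ℝ)} {ρ : ℝ} {y : {e // e ∈ E} → ℝ}
  {x : Fin N → ℝ}

lemma monomialVec_mem_monoSet (hx : IsBinaryVec x) : monomialVec E x ∈ monoSet E :=
  ⟨x, hx, fun _ => rfl⟩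

lemma Dx_eq_one_add_sum_monomialVec :
    Dx E v x = 1 + ∑ e ∈ E.attach, v e.1 * monomialVec E x e := by
  rw [Dx, ← Finset.sum_attach E]
  rfl

lemma one_le_Dx (hv : ∀ e ∈ E, 0 ≤ v e) (hx : IsBinaryVec x) : 1 ≤ Dx E v x := by
  refine le_add_of_nonneg_right (Finset.sum_nonneg fun c hc => mul_nonneg (hv c hc) ?_)
  rcases prod_eq_zero_or_one (s := c) fun i _ => hx i with h | h <;> simp [h]

lemma add_sum_smul_monomialVec :
    ρ + ∑ e ∈ E.attach, v e.1 * (ρ • monomialVec E x) e = ρ * Dx E v x := by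
  rw [Dx_eq_one_add_sum_monomialVec, mul_add, mul_one, Finset.mul_sum]
  simp only [Pi.smul_apply, smul_eq_mul, mul_left_comm]

lemma singleton_le_Lb (hv : ∀ e ∈ E, 0 ≤ v e) (hy : 0 ≤ y) (i : Fin N) :
    y ⟨{i}, hsing i⟩ ≤ Lb E hsing v ρ y i := by
  refine le_add_of_nonneg_right (Finset.sum_nonneg fun e _ => ?_)
  split_ifs
  · exact mul_nonneg (hv e.1 e.2) (hy e)
  · exact mul_nonneg (hv e.1 e.2) (le_max_left _ _)

lemma Ub_le_singleton_add_sum (hv : ∀ e ∈ E, 0 ≤ v e) (i : Fin N) :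
    Ub E hsing v ρ y i ≤ y ⟨{i}, hsing i⟩ + ∑ e ∈ E.attach, v e.1 * y e := by
  refine add_le_add le_rfl (Finset.sum_le_sum fun e _ => ?_)
  split_ifs
  · exact le_rfl
  · exact mul_le_mul_of_nonneg_left (min_le_right _ _) (hv e.1 e.2)

lemma singleton_add_sum_eq_mul_Dx {i : Fin N} {f : {e // e ∈ E} → ℝ}
    (hf : ∀ e, f e = x i * ρ * (v e.1 * monomialVec E x e)) :
    (ρ • monomialVec E x) ⟨{i}, hsing i⟩ + ∑ e ∈ E.attach, f e = x i * (ρ * Dx E v x) := by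
  rw [Finset.sum_congr rfl fun e _ => hf e, ← Finset.mul_sum, Dx_eq_one_add_sum_monomialVec]
  simp only [Pi.smul_apply, smul_eq_mul, monomialVec, Finset.prod_singleton]
  ring

lemma Lb_smul_monomialVec (hρ : 0 ≤ ρ) (hx : IsBinaryVec x) (i : Fin N) :
    Lb E hsing v ρ (ρ • monomialVec E x) i = x i * (ρ * Dx E v x) := by
  refine singleton_add_sum_eq_mul_Dx fun e => ?_
  have hxe := prod_eq_zero_or_one (s := e.1) fun j _ => hx j
  simp only [Pi.smul_apply, smul_eq_mul, monomialVec, Finset.prod_singleton]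
  split_ifs with hi
  · nth_rw 1 [← mul_prod_eq_prod_of_mem hi (hx i)]
    ring
  · rw [max_zero_mul_add_mul_sub_eq_mul hρ (hx i) hxe]
    ring

lemma Ub_smul_monomialVec (hρ : 0 ≤ ρ) (hx : IsBinaryVec x) (i : Fin N) :
    Ub E hsing v ρ (ρ • monomialVec E x) i = x i * (ρ * Dx E v x) := by
  refine singleton_add_sum_eq_mul_Dx fun e => ?_
  have hxe := prod_eq_zero_or_one (s := e.1) fun j _ => hx j
  simp only [Pi.smul_apply, smul_eq_mul, monomialVec, Finset.prod_singleton]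
  split_ifs with hi
  · nth_rw 1 [← mul_prod_eq_prod_of_mem hi (hx i)]
    ring
  · rw [min_mul_mul_eq_mul hρ (hx i) hxe]
    ring

lemma mem_persSystem_of_isBinaryVec (hv : ∀ e ∈ E, 0 ≤ v e) (hR : monoSet E ⊆ R)
    (hx : IsBinaryVec x) :
    (1 / Dx E v x, (1 / Dx E v x) • monomialVec E x, x) ∈ persSystem E hsing v R := by
  have hD : 0 < Dx E v x := one_pos.trans_le (one_le_Dx hv hx)
  have hρD : 1 / Dx E v x * Dx E v x = 1 := one_div_mul_cancel hD.ne'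
  refine ⟨by positivity, ⟨_, hR (monomialVec_mem_monoSet hx), rfl⟩,
    add_sum_smul_monomialVec.trans hρD, fun i => ?_⟩
  rw [Lb_smul_monomialVec (by positivity) hx, Ub_smul_monomialVec (by positivity) hx, hρD,
    mul_one]
  exact ⟨le_rfl, le_rfl⟩

lemma singleton_eq_of_Lb_le_of_le_Ub (hv : ∀ e ∈ E, 0 ≤ v e) {z : {e // e ∈ E} → ℝ}
    (hz : ∀ e, z e ∈ Set.Icc (0 : ℝ) 1) (hρ : 0 < ρ)
    (hsum : ρ + ∑ e ∈ E.attach, v e.1 * (ρ • z) e = 1) {i : Fin N} (hxi : x i = 0 ∨ x i = 1)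
    (hL : Lb E hsing v ρ (ρ • z) i ≤ x i) (hU : x i ≤ Ub E hsing v ρ (ρ • z) i) :
    z ⟨{i}, hsing i⟩ = x i := by
  have hy : 0 ≤ ρ • z := fun e => mul_nonneg hρ.le (hz e).1
  have hlow := (singleton_le_Lb hv hy i).trans hL
  have hup := hU.trans (Ub_le_singleton_add_sum hv i)
  have hzi := hz ⟨{i}, hsing i⟩
  simp only [Pi.smul_apply, smul_eq_mul] at hlow hup hsum
  rcases hxi with h | h <;> rw [h] at hlow hup ⊢
  · exact le_antisymm (by nlinarith [hzi.1]) hzi.1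
  · exact le_antisymm hzi.2 (by nlinarith)

lemma mem_choiceSet_of_mem_persSystem (hv : ∀ e ∈ E, 0 ≤ v e) (hR : IsExactOracle E hsing R)
    (hx : IsBinaryVec x) (h : (ρ, y, x) ∈ persSystem E hsing v R) : (ρ, y) ∈ choiceSet E v := by
  obtain ⟨hρ₀, ⟨z, hzR, hyz⟩, hsum, hLU⟩ := h
  dsimp only at hρ₀ hyz hsum hLU
  subst hyz
  have hρ : 0 < ρ := hρ₀.lt_of_ne fun h₀ => by
    subst h₀
    simp at hsum
  have hzx : ∀ i, z ⟨{i}, hsing i⟩ = x i := fun i =>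
    singleton_eq_of_Lb_le_of_le_Ub hv (hR.1 z hzR) hρ hsum (hx i) (hLU i).1 (hLU i).2
  have hz : z = monomialVec E x := funext fun e => by
    rw [hR.2.2 z hzR (fun i => hzx i ▸ hx i) e]
    exact Finset.prod_congr rfl fun i _ => hzx i
  subst hz
  have hρD : ρ * Dx E v x = 1 := add_sum_smul_monomialVec.symm.trans hsum
  have hρ' : ρ = 1 / Dx E v x := eq_one_div_of_mul_eq_one_left hρD
  refine ⟨x, hx, hρ', fun e => ?_⟩
  simp only [Pi.smul_apply, smul_eq_mul, hρ', monomialVec]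
  ring

theorem persSystem_proj_eq_choiceSet (hv : ∀ e ∈ E, 0 ≤ v e) (hR : IsExactOracle E hsing R) :
    {p : ℝ × ({e // e ∈ E} → ℝ) |
        ∃ x : Fin N → ℝ, IsBinaryVec x ∧ (p.1, p.2, x) ∈ persSystem E hsing v R}
      = choiceSet E v := by
  ext ⟨ρ, y⟩
  constructor
  · rintro ⟨x, hx, h⟩
    exact mem_choiceSet_of_mem_persSystem hv hR hx h
  · rintro ⟨x, hx, rfl, hy⟩
    obtain rfl : y = (1 / Dx E v x) • monomialVec E x := funext fun e => (hy e).trans <| by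
      simp only [Pi.smul_apply, smul_eq_mul, monomialVec]
      ring
    exact ⟨x, hx, mem_persSystem_of_isBinaryVec hv hR.2.1 hx⟩

end Perspective

theorem rmc_oracle_exact_and_perspective_is_MIP_general
    (N : ℕ)
    (E : Finset (Finset (Fin N)))
    (hne : ∀ e ∈ E, e.Nonempty)
    (hsing : ∀ i : Fin N, ({i} : Finset (Fin N)) ∈ E)
    (v : Finset (Fin N) → ℝ) (hv : ∀ e ∈ E, 0 < v e)
    (ord : Finset (Fin N) → ℕ → Fin N)
    (hord : ∀ e ∈ E, (Finset.range e.card).image (ord e) = e) :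
    monoSet E ⊆ rmcOracle E hsing ord ∧
    (∀ z ∈ rmcOracle E hsing ord,
      (∀ i : Fin N, z ⟨{i}, hsing i⟩ = 0 ∨ z ⟨{i}, hsing i⟩ = 1) →
      ∀ e : {e // e ∈ E}, z e = ∏ i ∈ e.1, z ⟨{i}, hsing i⟩) ∧
    {p : ℝ × ({e // e ∈ E} → ℝ) |
        ∃ x : Fin N → ℝ, IsBinaryVec x ∧
          (p.1, p.2, x) ∈ persSystem E hsing v (rmcOracle E hsing ord)}
      = choiceSet E v := by
  have hR : IsExactOracle E hsing (rmcOracle E hsing ord) := isExactOracle_rmcOracle hne hord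
  exact ⟨hR.2.1, hR.2.2, persSystem_proj_eq_choiceSet (fun e he => (hv e he).le) hR⟩

/-- **Proposition 1 (left-deep decomposition).** Given, for each bundle `e`, an enumeration
of its elements (`ord e` maps `{0,…,|e|−1}` onto `e`), the recursive McCormick relaxation
`R_RMC` is an exact relaxation oracle for `G`: it contains `M_G`, and every `z ∈ R_RMC` with
binary singleton coordinates satisfies `z_e = ∏_{i∈e} z_{{i}}` for all `e ∈ E`.
Consequently, the projection onto the `(ρ,y)`-coordinates of the perspective system with
`R = R_RMC` and binary `x` equals `C_G`. -/
theorem rmc_oracle_exact_and_perspective_is_MIP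
    (N : ℕ) (hN : 1 ≤ N)
    (E : Finset (Finset (Fin N)))
    (hne : ∀ e ∈ E, e.Nonempty)
    (hsing : ∀ i : Fin N, ({i} : Finset (Fin N)) ∈ E)
    (v : Finset (Fin N) → ℝ) (hv : ∀ e ∈ E, 0 < v e)
    (ord : Finset (Fin N) → ℕ → Fin N)
    (hord : ∀ e ∈ E, (Finset.range e.card).image (ord e) = e) :
    monoSet E ⊆ rmcOracle E hsing ord ∧
    (∀ z ∈ rmcOracle E hsing ord,
      (∀ i : Fin N, z ⟨{i}, hsing i⟩ = 0 ∨ z ⟨{i}, hsing i⟩ = 1) →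
      ∀ e : {e // e ∈ E}, z e = ∏ i ∈ e.1, z ⟨{i}, hsing i⟩) ∧
    {p : ℝ × ({e // e ∈ E} → ℝ) |
        ∃ x : Fin N → ℝ, IsBinaryVec x ∧
          (p.1, p.2, x) ∈ persSystem E hsing v (rmcOracle E hsing ord)}
      = choiceSet E v :=
  rmc_oracle_exact_and_perspective_is_MIP_general N E hne hsing v hv ord hord
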